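/- Let f : ℚ_p → ℝ be defined by f(x) = (p^b − 1)·(p/(p−1))·|x|_p^{−(b+1)} if |x|_p > 1 and f(x) = 0 if |x|_p ≤ 1, and let f^{*n} denote the n-fold convolution of f with itself with respect to μ (f^{*1} = f and f^{*(n+1)}(x) = ∫_{ℚ_p} f^{*n}(x − y)·f(y) dμ(y)). Then for every natural number n ≥ 1 and every x in ℚ_p, f^{*n}(x) = (1 − α)^n·𝟙[|x|_p ≤ 1] + Σ_{i=1}^∞ ((1 − α·p^{−ib})^n − (1 − α·p^{−(i−1)b})^n)·p^{−i}·𝟙[|x|_p ≤ p^i]. -/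

import Mathlib

open MeasureTheory

open scoped Classical

noncomputable instance (p : ℕ) [Fact p.Prime] : MeasurableSpace ℚ_[p] := borel _
instance (p : ℕ) [Fact p.Prime] : BorelSpace ℚ_[p] := ⟨rfl⟩

/-- The constant `α = (p/(p−1))·(1 − p^{−(b+1)})`. -/
noncomputable def alphaConst (p : ℕ) (b : ℝ) : ℝ :=
  ((p : ℝ) / ((p : ℝ) - 1)) * (1 - (p : ℝ) ^ (-(b + 1)))

/-- The density `f(x) = (p^b − 1)·(p/(p−1))·|x|_p^{−(b+1)}` for `|x|_p > 1`, `f(x) = 0`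
for `|x|_p ≤ 1`. -/
noncomputable def padicStepDensity (p : ℕ) [Fact p.Prime] (b : ℝ) (x : ℚ_[p]) : ℝ :=
  if 1 < ‖x‖ then ((p : ℝ) ^ b - 1) * ((p : ℝ) / ((p : ℝ) - 1)) * ‖x‖ ^ (-(b + 1)) else 0

/-!
Write `h_i = p^{-i}·𝟙[|x|_p ≤ p^i]` for the uniform density of the ball of radius `p^i` and
`E_i = h_i - h_{i+1}`. Since `f` is radial and, by the ultrametric inequality, constant on every
ball that misses `0`, the convolution of `f` with `𝟙[|x|_p ≤ p^i]` equals
`∫_{|y| ≤ p^i} f = 1 - p^{-ib}` on that ball and `p^i f(x)` off it. Hence `f * E_i = λ_i E_i`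
with `λ_i = 1 - α p^{-ib}`. Summing geometric series gives `f = ∑ λ_i E_i`, so
`f^{*n} = ∑ λ_i^n E_i` by induction, and summation by parts turns this into the stated formula.
-/

open Metric

section Ultrametric

variable {E : Type*} [NormedAddCommGroup E] [IsUltrametricDist E]

lemma norm_eq_of_mem_closedBall_of_lt_norm {x y : E} {r : ℝ} (hy : y ∈ closedBall x r)
    (hr : r < ‖x‖) : ‖y‖ = ‖x‖ := by
  have hyx : ‖y - x‖ < ‖x‖ := (mem_closedBall_iff_norm.1 hy).trans_lt hr
  rw [← sub_add_cancel y x, IsUltrametricDist.norm_add_eq_max_of_norm_ne_norm hyx.ne,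
    max_eq_right hyx.le]

variable [MeasurableSpace E] [BorelSpace E]

theorem setIntegral_closedBall_of_radial {F : Type*} [NormedAddCommGroup F] [NormedSpace ℝ F]
    [CompleteSpace F] (μ : Measure E) [μ.IsAddHaarMeasure] {f : E → F}
    (hf : ∀ y z, ‖y‖ = ‖z‖ → f y = f z) (x : E) (r : ℝ) :
    ∫ y in closedBall x r, f y ∂μ =
      if ‖x‖ ≤ r then ∫ y in closedBall 0 r, f y ∂μ else μ.real (closedBall 0 r) • f x := by
  split_ifs with hx
  · rw [IsUltrametricDist.closedBall_eq_of_mem (mem_closedBall_zero_iff.2 hx)]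
  · rw [setIntegral_congr_fun measurableSet_closedBall
      fun y hy => hf y x (norm_eq_of_mem_closedBall_of_lt_norm hy (not_le.1 hx)),
      setIntegral_const, Measure.addHaar_real_closedBall_center]

end Ultrametric

theorem tsum_mul_sub_succ {R : Type*} [Ring R] [TopologicalSpace R] [IsTopologicalRing R]
    [T2Space R] {a h : ℕ → R} (ha : Summable fun i => a i * h i)
    (ha' : Summable fun i => a i * h (i + 1)) :
    ∑' i, a i * (h i - h (i + 1)) = a 0 * h 0 + ∑' j, (a (j + 1) - a j) * h (j + 1) := by
  simp_rw [mul_sub]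
  rw [ha.tsum_sub ha', ha.tsum_eq_zero_add, add_sub_assoc,
    ← ((summable_nat_add_iff 1).2 ha).tsum_sub ha']
  simp_rw [sub_mul]

theorem tsum_ite_le_geometric_of_lt_one {a : ℝ} (ha₀ : 0 ≤ a) (ha₁ : a < 1) (m : ℕ) :
    ∑' j, (if m ≤ j then a ^ j else 0) = a ^ m / (1 - a) := by
  have hs : Summable fun j => if m ≤ j then a ^ j else 0 :=
    (summable_geometric_of_lt_one ha₀ ha₁).of_nonneg_of_le
      (fun j => by split_ifs <;> positivity) fun j => by split_ifs <;> simp [pow_nonneg ha₀]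
  rw [← hs.sum_add_tsum_nat_add m, Finset.sum_eq_zero fun j hj => if_neg (by simpa using hj)]
  simp_rw [if_pos (Nat.le_add_left m _), pow_add, tsum_mul_right, tsum_geometric_of_lt_one ha₀ ha₁]
  ring

section Padic

variable {p : ℕ} [Fact p.Prime]

lemma Padic.one_lt_natCast : (1 : ℝ) < p := mod_cast (Fact.out : p.Prime).one_lt

lemma Padic.natCast_pos : (0 : ℝ) < p := zero_lt_one.trans Padic.one_lt_natCast

lemma Padic.norm_eq_pow_succ_of_not_le {x : ℚ_[p]} {i : ℕ} (h : ¬ ‖x‖ ≤ (p : ℝ) ^ i)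
    (h' : ‖x‖ ≤ (p : ℝ) ^ (i + 1)) : ‖x‖ = (p : ℝ) ^ (i + 1) := by
  have := Padic.norm_le_pow_iff_norm_lt_pow_add_one x i
  simp only [zpow_natCast, ← Nat.cast_succ] at this
  exact h'.antisymm (not_lt.1 (mt this.2 h))

lemma Padic.exists_norm_eq_pow_succ {x : ℚ_[p]} (hx : 1 < ‖x‖) :
    ∃ m : ℕ, ‖x‖ = (p : ℝ) ^ (m + 1) := by
  classical
  have hN : ∃ N : ℕ, ‖x‖ ≤ (p : ℝ) ^ N :=
    (pow_unbounded_of_one_lt ‖x‖ Padic.one_lt_natCast).imp fun _ => le_of_lt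
  obtain ⟨m, hm⟩ : ∃ m, Nat.find hN = m + 1 :=
    Nat.exists_eq_add_one.2 (Nat.pos_of_ne_zero fun h => by
      have := Nat.find_spec hN
      rw [h, pow_zero] at this
      linarith)
  exact ⟨m, Padic.norm_eq_pow_succ_of_not_le (Nat.find_min hN (by omega)) (hm ▸ Nat.find_spec hN)⟩

lemma Padic.norm_sub_natCast_div_le_iff (x : ℚ_[p]) (j i : ℕ) :
    ‖x - j / (p : ℚ_[p]) ^ (i + 1)‖ ≤ (p : ℝ) ^ i ↔ ‖x * (p : ℚ_[p]) ^ (i + 1) - j‖ < 1 := by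
  have hp : (p : ℚ_[p]) ^ (i + 1) ≠ 0 :=
    pow_ne_zero _ (Nat.cast_ne_zero.2 (Fact.out : p.Prime).ne_zero)
  have hq : (0 : ℝ) < (p : ℝ) ^ (i + 1) := pow_pos Padic.natCast_pos _
  rw [← mul_div_cancel_right₀ x hp, ← sub_div, norm_div, mul_div_cancel_right₀ x hp, norm_pow,
    Padic.norm_p, inv_pow, div_inv_eq_mul, ← le_div_iff₀ hq, pow_succ (p : ℝ),
    div_mul_cancel_left₀ (pow_ne_zero _ Padic.natCast_pos.ne'), ← zpow_neg_one,
    Padic.norm_le_pow_iff_norm_lt_pow_add_one, neg_add_cancel, zpow_zero]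

lemma Padic.norm_le_one_iff_exists_norm_sub_natCast_lt_one (y : ℚ_[p]) :
    ‖y‖ ≤ 1 ↔ ∃ j < p, ‖y - j‖ < 1 := by
  constructor
  · intro hy
    set z : ℤ_[p] := ⟨y, hy⟩
    refine ⟨z.appr 1, by simpa using z.appr_lt 1, ?_⟩
    have := (PadicInt.norm_le_pow_iff_mem_span_pow _ 1).2 (z.appr_spec 1)
    rw [PadicInt.norm_le_pow_iff_norm_lt_pow_add_one, PadicInt.norm_def, PadicInt.coe_sub,
      PadicInt.coe_natCast] at this
    simpa using this
  · rintro ⟨j, -, hj⟩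
    rw [← sub_add_cancel y j]
    exact (Padic.nonarchimedean _ _).trans (max_le hj.le (mod_cast Padic.norm_int_le_one j))

lemma Padic.closedBall_pow_succ_eq_biUnion (i : ℕ) :
    closedBall (0 : ℚ_[p]) ((p : ℝ) ^ (i + 1)) =
      ⋃ j ∈ Finset.range p, closedBall ((j : ℚ_[p]) / (p : ℚ_[p]) ^ (i + 1)) ((p : ℝ) ^ i) := by
  ext x
  have hq : (0 : ℝ) < (p : ℝ) ^ (i + 1) := pow_pos Padic.natCast_pos _
  simp only [Set.mem_iUnion, Finset.mem_range, mem_closedBall, dist_eq_norm, sub_zero,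
    exists_prop, Padic.norm_sub_natCast_div_le_iff,
    ← Padic.norm_le_one_iff_exists_norm_sub_natCast_lt_one, norm_mul, norm_pow, Padic.norm_p,
    inv_pow, ← div_eq_mul_inv, div_le_one hq]

lemma Padic.pairwiseDisjoint_closedBall_natCast_div (i : ℕ) :
    (Finset.range p : Set ℕ).PairwiseDisjoint
      fun j : ℕ => closedBall ((j : ℚ_[p]) / (p : ℚ_[p]) ^ (i + 1)) ((p : ℝ) ^ i) := by
  intro j hj k hk hjk
  refine (IsUltrametricDist.closedBall_eq_or_disjoint _ _ _).resolve_left fun h => hjk ?_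
  have hk' := h ▸ mem_closedBall_self (x := (k : ℚ_[p]) / (p : ℚ_[p]) ^ (i + 1))
    (pow_pos Padic.natCast_pos i).le
  have hp : (p : ℚ_[p]) ^ (i + 1) ≠ 0 :=
    pow_ne_zero _ (Nat.cast_ne_zero.2 (Fact.out : p.Prime).ne_zero)
  rw [mem_closedBall, dist_eq_norm, Padic.norm_sub_natCast_div_le_iff, div_mul_cancel₀ _ hp,
    ← Int.cast_natCast, ← Int.cast_natCast (R := ℚ_[p]) j, ← Int.cast_sub,
    Padic.norm_intCast_lt_one_iff] at hk'
  simp only [Finset.coe_range, Set.mem_Iio] at hj hk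
  have := Int.eq_zero_of_abs_lt_dvd hk' (abs_sub_lt_iff.2 ⟨by omega, by omega⟩)
  omega

lemma Padic.measure_closedBall_pow (μ : Measure ℚ_[p]) [μ.IsAddHaarMeasure] (i : ℕ) :
    μ (closedBall 0 ((p : ℝ) ^ i)) = p ^ i * μ (closedBall 0 1) := by
  induction i with
  | zero => simp
  | succ i ih =>
    rw [Padic.closedBall_pow_succ_eq_biUnion, measure_biUnion_finset
      (Padic.pairwiseDisjoint_closedBall_natCast_div i) fun _ _ => measurableSet_closedBall]
    simp only [Measure.addHaar_closedBall_center, ih, Finset.sum_const, Finset.card_range,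
      nsmul_eq_mul, pow_succ]
    ring

lemma Padic.measureReal_closedBall_pow (μ : Measure ℚ_[p]) [μ.IsAddHaarMeasure]
    (hμ : μ (closedBall 0 1) = 1) (i : ℕ) : μ.real (closedBall 0 ((p : ℝ) ^ i)) = (p : ℝ) ^ i := by
  simp [measureReal_def, Padic.measure_closedBall_pow, hμ]

variable {b : ℝ}

variable (p b) in
lemma alphaConst_eq :
    alphaConst p b = ((p : ℝ) - (p : ℝ) ^ (-b)) / ((p : ℝ) - 1) := by
  have hq : (0 : ℝ) < p := Padic.natCast_pos
  have hq1 : (p : ℝ) - 1 ≠ 0 := sub_ne_zero.2 Padic.one_lt_natCast.ne'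
  rw [alphaConst, neg_add, Real.rpow_add hq, Real.rpow_neg_one]
  field_simp

lemma padicStepDensity_of_norm_eq_pow {x : ℚ_[p]} {k : ℕ} (hx : ‖x‖ = (p : ℝ) ^ (k + 1)) :
    padicStepDensity p b x =
      (1 - (p : ℝ) ^ (-b)) / ((p : ℝ) - 1) * ((p : ℝ) ^ (-b) / p) ^ k := by
  have hq : (0 : ℝ) < p := Padic.natCast_pos
  have hq1 : (p : ℝ) - 1 ≠ 0 := sub_ne_zero.2 Padic.one_lt_natCast.ne'
  have hq0 : (p : ℝ) ≠ 0 := hq.ne'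
  have hr : (p : ℝ) ^ b * (p : ℝ) ^ (-b) = 1 := by
    rw [← Real.rpow_add hq, add_neg_cancel, Real.rpow_zero]
  rw [padicStepDensity, if_pos (hx ▸ one_lt_pow₀ Padic.one_lt_natCast k.succ_ne_zero), hx,
    ← Real.rpow_natCast, ← Real.rpow_mul hq.le, show ((k + 1 : ℕ) : ℝ) * -(b + 1) =
      -b * (k + 1 : ℕ) + -1 * (k + 1 : ℕ) by ring, Real.rpow_add hq, Real.rpow_mul_natCast hq.le,
    Real.rpow_mul_natCast hq.le, Real.rpow_neg_one, inv_pow, div_pow, pow_succ, pow_succ]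
  field_simp
  linear_combination hr

lemma padicStepDensity_of_norm_le_one {x : ℚ_[p]} (hx : ‖x‖ ≤ 1) : padicStepDensity p b x = 0 :=
  if_neg hx.not_gt

lemma padicStepDensity_nonneg (hb : 0 ≤ b) (x : ℚ_[p]) : 0 ≤ padicStepDensity p b x := by
  have hq : (1 : ℝ) ≤ (p : ℝ) ^ b := Real.one_le_rpow Padic.one_lt_natCast.le hb
  unfold padicStepDensity
  split_ifs
  · have := Padic.one_lt_natCast (p := p)
    positivity
  · exact le_rfl

lemma padicStepDensity_le (hb : 0 ≤ b) (x : ℚ_[p]) :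
    padicStepDensity p b x ≤ ((p : ℝ) ^ b - 1) * ((p : ℝ) / ((p : ℝ) - 1)) := by
  have hq : (1 : ℝ) ≤ (p : ℝ) ^ b := Real.one_le_rpow Padic.one_lt_natCast.le hb
  have hc : 0 ≤ ((p : ℝ) ^ b - 1) * ((p : ℝ) / ((p : ℝ) - 1)) := by
    have := Padic.one_lt_natCast (p := p)
    exact mul_nonneg (by linarith) (div_nonneg (by linarith) (by linarith))
  unfold padicStepDensity
  split_ifs with hx
  · exact mul_le_of_le_one_right hc (Real.rpow_le_one_of_one_le_of_nonpos hx.le (by linarith))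
  · exact hc

lemma measurable_padicStepDensity : Measurable (padicStepDensity p b) :=
  Measurable.ite (measurableSet_lt measurable_const measurable_norm) (by fun_prop) measurable_const

lemma integrableOn_padicStepDensity_closedBall (μ : Measure ℚ_[p]) [μ.IsAddHaarMeasure]
    (hb : 0 ≤ b) (r : ℝ) : IntegrableOn (padicStepDensity p b) (closedBall 0 r) μ :=
  Measure.integrableOn_of_bounded measure_closedBall_lt_top.ne
    measurable_padicStepDensity.aestronglyMeasurable
    (ae_of_all _ fun x => by
      rw [Real.norm_of_nonneg (padicStepDensity_nonneg hb x)]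
      exact padicStepDensity_le hb x)

theorem setIntegral_padicStepDensity_closedBall_zero (μ : Measure ℚ_[p]) [μ.IsAddHaarMeasure]
    (hμ : μ (closedBall 0 1) = 1) (hb : 0 ≤ b) (i : ℕ) :
    ∫ y in closedBall 0 ((p : ℝ) ^ i), padicStepDensity p b y ∂μ = 1 - ((p : ℝ) ^ (-b)) ^ i := by
  induction i with
  | zero =>
    rw [pow_zero, setIntegral_congr_fun measurableSet_closedBall
      fun y hy => padicStepDensity_of_norm_le_one (mem_closedBall_zero_iff.1 hy)]
    simp
  | succ i ih =>
    have hsub : closedBall (0 : ℚ_[p]) ((p : ℝ) ^ i) ⊆ closedBall 0 ((p : ℝ) ^ (i + 1)) :=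
      closedBall_subset_closedBall (pow_le_pow_right₀ Padic.one_lt_natCast.le i.le_succ)
    have hshell := setIntegral_sdiff measurableSet_closedBall
      (integrableOn_padicStepDensity_closedBall μ hb _) hsub
    rw [setIntegral_congr_fun (measurableSet_closedBall.diff measurableSet_closedBall)
      fun y hy => padicStepDensity_of_norm_eq_pow (Padic.norm_eq_pow_succ_of_not_le
        (mt mem_closedBall_zero_iff.2 hy.2) (mem_closedBall_zero_iff.1 hy.1)),
      setIntegral_const,
      measureReal_sdiff hsub measurableSet_closedBall measure_closedBall_lt_top.ne,
      Padic.measureReal_closedBall_pow μ hμ, Padic.measureReal_closedBall_pow μ hμ, ih,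
      smul_eq_mul] at hshell
    have hq1 : (p : ℝ) - 1 ≠ 0 := sub_ne_zero.2 Padic.one_lt_natCast.ne'
    have hq0 : (p : ℝ) ≠ 0 := Padic.natCast_pos.ne'
    have hval : ((p : ℝ) ^ (i + 1) - (p : ℝ) ^ i) *
        ((1 - (p : ℝ) ^ (-b)) / ((p : ℝ) - 1) * ((p : ℝ) ^ (-b) / p) ^ i) =
        ((p : ℝ) ^ (-b)) ^ i - ((p : ℝ) ^ (-b)) ^ (i + 1) := by
      rw [div_pow]
      field_simp
      ring
    linarith

theorem integrable_padicStepDensity (μ : Measure ℚ_[p]) [μ.IsAddHaarMeasure]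
    (hμ : μ (closedBall 0 1) = 1) (hb : 0 ≤ b) : Integrable (padicStepDensity p b) μ := by
  refine (aecover_closedBall (tendsto_pow_atTop_atTop_of_one_lt (Padic.one_lt_natCast (p := p)))
    ).integrable_of_integral_norm_bounded 1
    (fun i => integrableOn_padicStepDensity_closedBall μ hb _) (.of_forall fun i => ?_)
  simp_rw [Real.norm_of_nonneg (padicStepDensity_nonneg hb _)]
  rw [setIntegral_padicStepDensity_closedBall_zero μ hμ hb]
  have := pow_nonneg (Real.rpow_nonneg (Nat.cast_nonneg p) (-b)) i
  linarith

lemma padicStepDensity_congr_norm {y z : ℚ_[p]} (h : ‖y‖ = ‖z‖) :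
    padicStepDensity p b y = padicStepDensity p b z := by
  simp only [padicStepDensity, h]

theorem setIntegral_padicStepDensity_closedBall (μ : Measure ℚ_[p]) [μ.IsAddHaarMeasure]
    (hμ : μ (closedBall 0 1) = 1) (hb : 0 ≤ b) (x : ℚ_[p]) (i : ℕ) :
    ∫ y in closedBall x ((p : ℝ) ^ i), padicStepDensity p b y ∂μ =
      if ‖x‖ ≤ (p : ℝ) ^ i then 1 - ((p : ℝ) ^ (-b)) ^ i
      else (p : ℝ) ^ i * padicStepDensity p b x := by
  rw [setIntegral_closedBall_of_radial μ (fun _ _ => padicStepDensity_congr_norm),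
    setIntegral_padicStepDensity_closedBall_zero μ hμ hb, Padic.measureReal_closedBall_pow μ hμ,
    smul_eq_mul]

variable (p) in
noncomputable def ballDensity (i : ℕ) : ℚ_[p] → ℝ :=
  (closedBall 0 ((p : ℝ) ^ i)).indicator fun _ => ((p : ℝ) ^ i)⁻¹

variable (p) in
noncomputable def ballDensityDiff (i : ℕ) (x : ℚ_[p]) : ℝ :=
  ballDensity p i x - ballDensity p (i + 1) x

variable (p b) in
noncomputable def stepEigenvalue (i : ℕ) : ℝ :=
  1 - alphaConst p b * ((p : ℝ) ^ (-b)) ^ i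

lemma ballDensity_nonneg (i : ℕ) (x : ℚ_[p]) : 0 ≤ ballDensity p i x :=
  Set.indicator_nonneg (fun _ _ => by positivity) x

lemma ballDensity_le (i : ℕ) (x : ℚ_[p]) : ballDensity p i x ≤ ((p : ℝ) ^ i)⁻¹ :=
  Set.indicator_le_self' (fun _ _ => by positivity) x

lemma abs_ballDensityDiff_le (i : ℕ) (x : ℚ_[p]) : |ballDensityDiff p i x| ≤ ((p : ℝ) ^ i)⁻¹ :=
  abs_sub_le_of_nonneg_of_le (ballDensity_nonneg i x) (ballDensity_le i x)
    (ballDensity_nonneg (i + 1) x) ((ballDensity_le (i + 1) x).trans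
      (inv_anti₀ (pow_pos Padic.natCast_pos i)
        (pow_le_pow_right₀ Padic.one_lt_natCast.le i.le_succ)))

lemma ballDensity_sub_mul (x : ℚ_[p]) (i : ℕ) (g : ℚ_[p] → ℝ) :
    (fun y => ballDensity p i (x - y) * g y) =
      (closedBall x ((p : ℝ) ^ i)).indicator fun y => ((p : ℝ) ^ i)⁻¹ * g y := by
  ext y
  simp only [ballDensity, Set.indicator_apply, mem_closedBall, dist_eq_norm', zero_sub, norm_neg,
    ite_mul, zero_mul]

lemma integral_ballDensity_sub_mul (μ : Measure ℚ_[p]) (x : ℚ_[p]) (i : ℕ) (g : ℚ_[p] → ℝ) :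
    ∫ y, ballDensity p i (x - y) * g y ∂μ =
      ((p : ℝ) ^ i)⁻¹ * ∫ y in closedBall x ((p : ℝ) ^ i), g y ∂μ := by
  rw [ballDensity_sub_mul, integral_indicator measurableSet_closedBall, integral_const_mul]

lemma integrable_ballDensity_sub_mul {μ : Measure ℚ_[p]} {g : ℚ_[p] → ℝ} (hg : Integrable g μ)
    (x : ℚ_[p]) (i : ℕ) : Integrable (fun y => ballDensity p i (x - y) * g y) μ := by
  rw [ballDensity_sub_mul]
  exact (hg.const_mul _).indicator measurableSet_closedBall

lemma integrable_ballDensityDiff_sub_mul {μ : Measure ℚ_[p]} {g : ℚ_[p] → ℝ}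
    (hg : Integrable g μ) (x : ℚ_[p]) (i : ℕ) :
    Integrable (fun y => ballDensityDiff p i (x - y) * g y) μ := by
  simp only [ballDensityDiff, sub_mul]
  exact (integrable_ballDensity_sub_mul hg x i).sub (integrable_ballDensity_sub_mul hg x (i + 1))

theorem integral_ballDensityDiff_sub_mul_padicStepDensity (μ : Measure ℚ_[p])
    [μ.IsAddHaarMeasure] (hμ : μ (closedBall 0 1) = 1) (hb : 0 ≤ b) (i : ℕ) (x : ℚ_[p]) :
    ∫ y, ballDensityDiff p i (x - y) * padicStepDensity p b y ∂μ =
      stepEigenvalue p b i * ballDensityDiff p i x := by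
  have hf := integrable_padicStepDensity μ hμ hb
  simp only [ballDensityDiff, sub_mul]
  rw [integral_sub (integrable_ballDensity_sub_mul hf x i)
    (integrable_ballDensity_sub_mul hf x (i + 1)),
    integral_ballDensity_sub_mul, integral_ballDensity_sub_mul,
    setIntegral_padicStepDensity_closedBall μ hμ hb,
    setIntegral_padicStepDensity_closedBall μ hμ hb]
  have hq1 : (p : ℝ) - 1 ≠ 0 := sub_ne_zero.2 Padic.one_lt_natCast.ne'
  have hq0 : (p : ℝ) ≠ 0 := Padic.natCast_pos.ne'
  simp only [ballDensity, Set.indicator_apply, mem_closedBall_zero_iff, stepEigenvalue,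
    alphaConst_eq]
  by_cases h : ‖x‖ ≤ (p : ℝ) ^ i
  · have h' : ‖x‖ ≤ (p : ℝ) ^ (i + 1) :=
      h.trans (pow_le_pow_right₀ Padic.one_lt_natCast.le i.le_succ)
    simp only [if_pos h, if_pos h']
    field_simp
    ring
  by_cases h' : ‖x‖ ≤ (p : ℝ) ^ (i + 1)
  · simp only [if_neg h, if_pos h', padicStepDensity_of_norm_eq_pow
      (Padic.norm_eq_pow_succ_of_not_le h h')]
    rw [div_pow]
    field_simp
    ring
  · simp only [if_neg h, if_neg h']
    field_simp
    ring

lemma abs_stepEigenvalue_le_one (hb : 0 ≤ b) (i : ℕ) : |stepEigenvalue p b i| ≤ 1 := by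
  have hq := Padic.one_lt_natCast (p := p)
  have hr₀ : 0 < (p : ℝ) ^ (-b) := Real.rpow_pos_of_pos (by linarith) _
  have hr₁ : (p : ℝ) ^ (-b) ≤ 1 := Real.rpow_le_one_of_one_le_of_nonpos hq.le (by linarith)
  have hα₀ : 0 ≤ alphaConst p b := by
    rw [alphaConst_eq]; exact div_nonneg (by linarith) (by linarith)
  have hα₂ : alphaConst p b ≤ 2 := by
    have : (2 : ℝ) ≤ p := mod_cast (Fact.out : p.Prime).two_le
    rw [alphaConst_eq, div_le_iff₀ (by linarith)]; linarith
  have hri₀ := pow_nonneg hr₀.le i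
  have hri₁ := pow_le_one₀ hr₀.le hr₁ (n := i)
  rw [stepEigenvalue, abs_le]
  constructor <;> nlinarith

variable (p) in
lemma summable_of_abs_le_mul_inv_pow {u : ℕ → ℝ} (C : ℝ)
    (hu : ∀ i, |u i| ≤ C * ((p : ℝ) ^ i)⁻¹) : Summable u := by
  refine .of_norm_bounded ((summable_geometric_of_lt_one (by positivity)
    (inv_lt_one_of_one_lt₀ (Padic.one_lt_natCast (p := p)))).mul_left C) fun i => ?_
  rw [Real.norm_eq_abs, inv_pow]
  exact hu i

lemma abs_stepEigenvalue_pow_mul_le (hb : 0 ≤ b) (n i : ℕ) {c C : ℝ} (hc : |c| ≤ C) :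
    |stepEigenvalue p b i ^ n * c| ≤ C := by
  rw [abs_mul, abs_pow]
  exact (mul_le_of_le_one_left (abs_nonneg c)
    (pow_le_one₀ (abs_nonneg _) (abs_stepEigenvalue_le_one hb i))).trans hc

theorem tsum_stepEigenvalue_pow_mul_ballDensityDiff (hb : 0 ≤ b) (n : ℕ) (x : ℚ_[p]) :
    ∑' i, stepEigenvalue p b i ^ n * ballDensityDiff p i x =
      stepEigenvalue p b 0 ^ n * ballDensity p 0 x +
        ∑' j, (stepEigenvalue p b (j + 1) ^ n - stepEigenvalue p b j ^ n) *
          ballDensity p (j + 1) x := by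
  have hdens : ∀ i, |ballDensity p i x| ≤ 1 * ((p : ℝ) ^ i)⁻¹ := fun i => by
    rw [one_mul, abs_of_nonneg (ballDensity_nonneg i x)]; exact ballDensity_le i x
  have hdens_succ : ∀ i, |ballDensity p (i + 1) x| ≤ 1 * ((p : ℝ) ^ i)⁻¹ := fun i =>
    (hdens (i + 1)).trans (mul_le_mul_of_nonneg_left (inv_anti₀ (pow_pos Padic.natCast_pos i)
      (pow_le_pow_right₀ Padic.one_lt_natCast.le i.le_succ)) zero_le_one)
  exact tsum_mul_sub_succ
    (summable_of_abs_le_mul_inv_pow p 1 fun i => abs_stepEigenvalue_pow_mul_le hb n i (hdens i))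
    (summable_of_abs_le_mul_inv_pow p 1 fun i =>
      abs_stepEigenvalue_pow_mul_le hb n i (hdens_succ i))

lemma tsum_stepEigenvalue_sub_mul_ballDensity (hb : 0 ≤ b) {x : ℚ_[p]} {m : ℕ}
    (hm : ∀ j, ‖x‖ ≤ (p : ℝ) ^ (j + 1) ↔ m ≤ j) :
    ∑' j, (stepEigenvalue p b (j + 1) - stepEigenvalue p b j) * ballDensity p (j + 1) x =
      (1 - (p : ℝ) ^ (-b)) / ((p : ℝ) - 1) * ((p : ℝ) ^ (-b) / p) ^ m := by
  have hq := Padic.one_lt_natCast (p := p)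
  have hq1 : (p : ℝ) - 1 ≠ 0 := sub_ne_zero.2 hq.ne'
  have hq0 : (p : ℝ) ≠ 0 := Padic.natCast_pos.ne'
  have hr₀ : 0 < (p : ℝ) ^ (-b) := Real.rpow_pos_of_pos Padic.natCast_pos _
  have hr₁ : (p : ℝ) ^ (-b) ≤ 1 := Real.rpow_le_one_of_one_le_of_nonpos hq.le (by linarith)
  have hqr : (p : ℝ) - (p : ℝ) ^ (-b) ≠ 0 := by linarith
  have hterm : ∀ j, (stepEigenvalue p b (j + 1) - stepEigenvalue p b j) * ballDensity p (j + 1) x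
      = alphaConst p b * (1 - (p : ℝ) ^ (-b)) / p *
        (if m ≤ j then ((p : ℝ) ^ (-b) / p) ^ j else 0) := by
    intro j
    simp only [stepEigenvalue, ballDensity, Set.indicator_apply, mem_closedBall_zero_iff, hm j]
    split_ifs
    · rw [div_pow]
      field_simp
      ring
    · simp
  rw [tsum_congr hterm, tsum_mul_left, tsum_ite_le_geometric_of_lt_one (by positivity)
    ((div_lt_one Padic.natCast_pos).2 (by linarith)), alphaConst_eq]
  field_simp

theorem padicStepDensity_eq_tsum (hb : 0 ≤ b) (x : ℚ_[p]) :
    padicStepDensity p b x = ∑' i, stepEigenvalue p b i * ballDensityDiff p i x := by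
  have hq := Padic.one_lt_natCast (p := p)
  have hsum := tsum_stepEigenvalue_pow_mul_ballDensityDiff hb 1 x
  simp only [pow_one] at hsum
  rw [hsum]
  rcases le_or_gt ‖x‖ 1 with hx | hx
  · rw [tsum_stepEigenvalue_sub_mul_ballDensity hb
      fun j => iff_of_true (hx.trans (one_le_pow₀ hq.le)) j.zero_le,
      padicStepDensity_of_norm_le_one hx]
    have hq1 : (p : ℝ) - 1 ≠ 0 := sub_ne_zero.2 hq.ne'
    simp only [ballDensity, stepEigenvalue, pow_zero, inv_one, Set.indicator_apply,
      mem_closedBall_zero_iff, if_pos hx, alphaConst_eq]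
    field_simp
    ring
  · obtain ⟨m, hm⟩ := Padic.exists_norm_eq_pow_succ hx
    rw [tsum_stepEigenvalue_sub_mul_ballDensity hb
      fun j => by rw [hm, pow_le_pow_iff_right₀ hq, add_le_add_iff_right],
      padicStepDensity_of_norm_eq_pow hm]
    simp [ballDensity, hx.not_ge]

theorem integral_sub_mul_padicStepDensity_of_eq_tsum (μ : Measure ℚ_[p]) [μ.IsAddHaarMeasure]
    (hμ : μ (closedBall 0 1) = 1) (hb : 0 ≤ b) {G : ℚ_[p] → ℝ} {n : ℕ}
    (hG : ∀ z, G z = ∑' i, stepEigenvalue p b i ^ n * ballDensityDiff p i z) (x : ℚ_[p]) :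
    ∫ y, G (x - y) * padicStepDensity p b y ∂μ =
      ∑' i, stepEigenvalue p b i ^ (n + 1) * ballDensityDiff p i x := by
  have hf := integrable_padicStepDensity μ hμ hb
  have hint : ∀ i, Integrable (fun y => stepEigenvalue p b i ^ n *
      (ballDensityDiff p i (x - y) * padicStepDensity p b y)) μ := fun i =>
    (integrable_ballDensityDiff_sub_mul hf x i).const_mul _
  have hsum : Summable fun i => ∫ y, ‖stepEigenvalue p b i ^ n *
      (ballDensityDiff p i (x - y) * padicStepDensity p b y)‖ ∂μ := by
    refine summable_of_abs_le_mul_inv_pow p (∫ y, padicStepDensity p b y ∂μ) fun i => ?_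
    rw [abs_of_nonneg (integral_nonneg fun _ => norm_nonneg _), mul_comm, ← integral_const_mul]
    refine integral_mono (hint i).norm (hf.const_mul _) fun y => ?_
    rw [Real.norm_eq_abs, ← mul_assoc, abs_mul, abs_of_nonneg (padicStepDensity_nonneg hb y)]
    exact mul_le_mul_of_nonneg_right
      (abs_stepEigenvalue_pow_mul_le hb n i (abs_ballDensityDiff_le i _))
      (padicStepDensity_nonneg hb y)
  simp_rw [hG, ← tsum_mul_right, mul_assoc]
  rw [← integral_tsum_of_summable_integral_norm hint hsum]
  refine tsum_congr fun i => ?_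
  rw [integral_const_mul, integral_ballDensityDiff_sub_mul_padicStepDensity μ hμ hb, pow_succ,
    mul_assoc]

theorem eq_tsum_stepEigenvalue_pow_of_convolution (μ : Measure ℚ_[p]) [μ.IsAddHaarMeasure]
    (hμ : μ (closedBall 0 1) = 1) (hb : 0 ≤ b) (F : ℕ → ℚ_[p] → ℝ)
    (hF1 : F 1 = padicStepDensity p b)
    (hFsucc : ∀ n : ℕ, 1 ≤ n → ∀ x : ℚ_[p],
      F (n + 1) x = ∫ y, F n (x - y) * padicStepDensity p b y ∂μ)
    (n : ℕ) (hn : 1 ≤ n) (x : ℚ_[p]) :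
    F n x = ∑' i, stepEigenvalue p b i ^ n * ballDensityDiff p i x := by
  induction n, hn using Nat.le_induction generalizing x with
  | base => simpa [hF1] using padicStepDensity_eq_tsum hb x
  | succ n hn ih =>
    rw [hFsucc n hn x, integral_sub_mul_padicStepDensity_of_eq_tsum μ hμ hb ih]

lemma stepEigenvalue_eq_rpow (i : ℕ) :
    stepEigenvalue p b i = 1 - alphaConst p b * (p : ℝ) ^ (-((i : ℝ) * b)) := by
  rw [stepEigenvalue, ← Real.rpow_mul_natCast Padic.natCast_pos.le, neg_mul, mul_comm b]

lemma ballDensity_eq_rpow (i : ℕ) (x : ℚ_[p]) :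
    ballDensity p i x = (p : ℝ) ^ (-(i : ℝ)) * if ‖x‖ ≤ (p : ℝ) ^ (i : ℝ) then 1 else 0 := by
  simp [ballDensity, Set.indicator_apply, Real.rpow_neg Padic.natCast_pos.le]

end Padic

/-- Let `F n = f^{*n}` denote the `n`-fold convolution of `f = padicStepDensity p b` with itself
with respect to the Haar measure `μ` on `ℚ_p` normalized so that `μ(ℤ_p) = 1`
(`f^{*1} = f` and `f^{*(n+1)}(x) = ∫ f^{*n}(x − y)·f(y) dμ(y)`). Then for every `n ≥ 1` and
every `x ∈ ℚ_p`,
`f^{*n}(x) = (1 − α)^n·𝟙[|x|_p ≤ 1]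
  + Σ_{i=1}^∞ ((1 − α·p^{−ib})^n − (1 − α·p^{−(i−1)b})^n)·p^{−i}·𝟙[|x|_p ≤ p^i]`
(the series indexed here by `i = j + 1`, `j ∈ ℕ`). -/
theorem padicStepDensity_convolution_formula (p : ℕ) [Fact p.Prime] (b : ℝ) (hb : 0 < b)
    (μ : Measure ℚ_[p]) [μ.IsAddHaarMeasure] (hμ : μ {x : ℚ_[p] | ‖x‖ ≤ 1} = 1)
    (F : ℕ → ℚ_[p] → ℝ)
    (hF1 : F 1 = padicStepDensity p b)
    (hFsucc : ∀ n : ℕ, 1 ≤ n → ∀ x : ℚ_[p],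
      F (n + 1) x = ∫ y, F n (x - y) * padicStepDensity p b y ∂μ)
    (n : ℕ) (hn : 1 ≤ n) (x : ℚ_[p]) :
    F n x =
      (1 - alphaConst p b) ^ n * (if ‖x‖ ≤ 1 then 1 else 0)
        + ∑' j : ℕ,
            ((1 - alphaConst p b * (p : ℝ) ^ (-(((j : ℝ) + 1) * b))) ^ n
              - (1 - alphaConst p b * (p : ℝ) ^ (-((j : ℝ) * b))) ^ n)
            * (p : ℝ) ^ (-((j : ℝ) + 1))
            * (if ‖x‖ ≤ (p : ℝ) ^ ((j : ℝ) + 1) then 1 else 0) := by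
  have hμ' : μ (closedBall 0 1) = 1 := by
    rwa [← show {x : ℚ_[p] | ‖x‖ ≤ 1} = closedBall 0 1 by ext; simp]
  rw [eq_tsum_stepEigenvalue_pow_of_convolution μ hμ' hb.le F hF1 hFsucc n hn x,
    tsum_stepEigenvalue_pow_mul_ballDensityDiff hb.le n x]
  congr 1
  · simp [stepEigenvalue, ballDensity, Set.indicator_apply]
  · refine tsum_congr fun j => ?_
    rw [stepEigenvalue_eq_rpow, stepEigenvalue_eq_rpow, ballDensity_eq_rpow]
    push_cast
    ring
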